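/- Let Fᵢ be an invertible real 3×3 matrix and let C and T̃ be arbitrary real 3×3 matrices. Define Cᵢ := Fᵢᵀ·Fᵢ, Ĉₑ := Fᵢ⁻ᵀ·C·Fᵢ⁻¹ and Ŝ := Fᵢ·T̃·Fᵢᵀ. Then Fᵢᵀ·(Ĉₑ·Ŝ)^D·Fᵢ = (C·T̃)^D·Cᵢ. (This is the pull-back identity transforming the deviatoric Mandel tensor on the intermediate configuration to the reference configuration; it is the key step in transforming the flow rule of the Maxwell model to the Lagrangian form Ċᵢ = (1/η)(C T̃)^D Cᵢ.) -/
import Mathlib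


open Matrix

abbrev Mat := Matrix (Fin 3) (Fin 3) ℝ

/-- The deviatoric part of a matrix. -/
noncomputable def dev (M : Mat) : Mat := M - (M.trace / 3) • (1 : Mat)

/-- the pull-back identity
`Fᵢᵀ·(Ĉₑ·Ŝ)^D·Fᵢ = (C·T̃)^D·Cᵢ` with `Cᵢ = Fᵢᵀ·Fᵢ`, `Ĉₑ = Fᵢ⁻ᵀ·C·Fᵢ⁻¹`, `Ŝ = Fᵢ·T̃·Fᵢᵀ`. -/
theorem mandel_pullback (Fi : Mat) (hFi : IsUnit Fi) (C T : Mat) :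
    Fiᵀ * dev (((Fi⁻¹)ᵀ * C * Fi⁻¹) * (Fi * T * Fiᵀ)) * Fi = dev (C * T) * (Fiᵀ * Fi) := by
  have hinv : Fi⁻¹ * Fi = 1 := nonsing_inv_mul Fi ((isUnit_iff_isUnit_det Fi).mp hFi)
  have hinvT : Fiᵀ * (Fi⁻¹)ᵀ = 1 := by
    rw [← transpose_mul, hinv, transpose_one]
  have key : ((Fi⁻¹)ᵀ * C * Fi⁻¹) * (Fi * T * Fiᵀ) = (Fi⁻¹)ᵀ * (C * T) * Fiᵀ := by
    have : Fi⁻¹ * (Fi * T * Fiᵀ) = T * Fiᵀ := by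
      rw [← mul_assoc, ← mul_assoc, hinv, one_mul]
    rw [mul_assoc ((Fi⁻¹)ᵀ * C), this]
    simp only [mul_assoc]
  have htr : ((Fi⁻¹)ᵀ * (C * T) * Fiᵀ).trace = (C * T).trace := by
    rw [trace_mul_cycle, ← mul_assoc, hinvT, one_mul]
  rw [key, dev, dev, htr]
  have : Fiᵀ * ((Fi⁻¹)ᵀ * (C * T) * Fiᵀ) * Fi = C * T * (Fiᵀ * Fi) := by
    rw [← mul_assoc, ← mul_assoc, hinvT, one_mul, mul_assoc, mul_assoc]
  rw [mul_sub, sub_mul, this, mul_smul_comm, smul_mul_assoc, mul_one, sub_mul,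
    smul_mul_assoc, one_mul]
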